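/- (1) If σ, ω ∈ Φ^* satisfy σ_L ⪯ ω_L and σ_R, ω_R are comparable, then σ_R ⪯ ω_R. (2) For every pair σ, ω ∈ Φ^*, the cylinders satisfy: [σ] ∩ [ω] = ∅, or [σ] ⊆ [ω], or [ω] ⊆ [σ]. -/

import Mathlib

open Filter MeasureTheory
open scoped BigOperators ENNReal NNReal Topology

namespace LGQ

noncomputable section

/-- The alphabet `G = {(i,j) : 1 ≤ i ≤ n_j, 1 ≤ j ≤ m}`, encoded as a sigma type:
an element is `⟨j, i⟩` with `j : Fin m` (the `y`-coordinate) and `i : Fin (n j)`. -/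
abbrev Alph (m : ℕ) (n : Fin m → ℕ) := Σ j : Fin m, Fin (n j)

/-- A pair `σ = (σ_L, σ_R)` with `σ_L ∈ G^*` and `σ_R ∈ G_y^*`. -/
abbrev Wd (m : ℕ) (n : Fin m → ℕ) := List (Alph m n) × List (Fin m)

variable {m : ℕ} {n : Fin m → ℕ}

/-- `a_ω := ∏ a_{i_h j_h}` along a word `ω ∈ G^*`. -/
def aP (a : Alph m n → ℝ) (w : List (Alph m n)) : ℝ := (w.map a).prod

/-- `b_τ := ∏ b_{j_h}` along a word `τ ∈ G_y^*`. -/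
def bP (b : Fin m → ℝ) (τ : List (Fin m)) : ℝ := (τ.map b).prod

/-- `σ_y := (σ_L)_y ∗ σ_R` : the `y`-word of a pair `σ = σ_L ∗ σ_R`. -/
def sy (σ : Wd m n) : List (Fin m) := σ.1.map Sigma.fst ++ σ.2

/-- `Ψ_l := {σ = σ_L ∗ σ_R : σ_L ∈ G^l, σ_R ∈ G_y^*, b_{(σ_y)^-} ≥ a_{σ_L} > b_{σ_y}}`. -/
def Psi (a : Alph m n → ℝ) (b : Fin m → ℝ) (l : ℕ) : Set (Wd m n) :=
  {σ | σ.1.length = l ∧ 1 ≤ σ.2.length ∧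
    aP a σ.1 ≤ bP b (sy σ).dropLast ∧ bP b (sy σ) < aP a σ.1}

/-- `Ψ^* := ⋃_{l ≥ 1} Ψ_l`. -/
def PsiStar (a : Alph m n → ℝ) (b : Fin m → ℝ) : Set (Wd m n) :=
  {σ | ∃ l, 1 ≤ l ∧ σ ∈ Psi a b l}

/-- `q_j := Σ_{i=1}^{n_j} p_{ij}`. -/
def qf (p : Alph m n → ℝ) (j : Fin m) : ℝ := ∑ i : Fin (n j), p ⟨j, i⟩

/-- `p_{σ_L} := ∏ p_{i_h j_h}`. -/
def pP (p : Alph m n → ℝ) (w : List (Alph m n)) : ℝ := (w.map p).prod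

/-- `q_{σ_R} := ∏ q_{j_h}`. -/
def qP (p : Alph m n → ℝ) (τ : List (Fin m)) : ℝ := (τ.map (qf p)).prod

/-- `E_r(σ) := p_{σ_L} q_{σ_R} a_{σ_L}^r` (note `E_r(θ) = 1`). -/
def Er (a p : Alph m n → ℝ) (r : ℝ) (σ : Wd m n) : ℝ :=
  pP p σ.1 * qP p σ.2 * aP a σ.1 ^ r

/-- `a̲ := min a_{ij}`. -/
def aLo (a : Alph m n → ℝ) : ℝ := ⨅ g, a g

/-- `ā := max a_{ij}`. -/
def aHi (a : Alph m n → ℝ) : ℝ := ⨆ g, a g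

/-- `b̲ := min b_j`. -/
def bLo (b : Fin m → ℝ) : ℝ := ⨅ j, b j

/-- `b̄ := max b_j`. -/
def bHi (b : Fin m → ℝ) : ℝ := ⨆ j, b j

/-- `p̲ := min p_{ij}`. -/
def pLo (p : Alph m n → ℝ) : ℝ := ⨅ g, p g

/-- `q̲ := min q_j`. -/
def qLo (p : Alph m n → ℝ) : ℝ := ⨅ j, qf p j

/-- `A_1 := ⌊log a̲ / log b̄⌋ + 1`. -/
def A1 (a : Alph m n → ℝ) (b : Fin m → ℝ) : ℤ :=
  ⌊Real.log (aLo a) / Real.log (bHi b)⌋ + 1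

/-- `A_2 := ⌊log b̲ / log ā⌋ + 1`. -/
def A2 (a : Alph m n → ℝ) (b : Fin m → ℝ) : ℤ :=
  ⌊Real.log (bLo b) / Real.log (aHi a)⌋ + 1

/-- `A_3 := max_{(i,j)∈G} a_{ij}/b_j`. -/
def A3 (a : Alph m n → ℝ) (b : Fin m → ℝ) : ℝ := ⨆ g : Alph m n, a g / b g.1

/-- `A_4 := log A_3 / log b̲`. -/
def A4 (a : Alph m n → ℝ) (b : Fin m → ℝ) : ℝ := Real.log (A3 a b) / Real.log (bLo b)

/-- `A_6 := ⌊1/A_4⌋`. -/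
def A6 (a : Alph m n → ℝ) (b : Fin m → ℝ) : ℤ := ⌊1 / A4 a b⌋

/-- `η̲_r := p̲ q̲^{A_1} a̲^r`. -/
def etaLo (a : Alph m n → ℝ) (b : Fin m → ℝ) (p : Alph m n → ℝ) (r : ℝ) : ℝ :=
  pLo p * qLo p ^ A1 a b * aLo a ^ r

/-- `A_{5,r} := ⌊log(q̲² η̲_r)/(r·log ā)⌋`. -/
def A5 (a : Alph m n → ℝ) (b : Fin m → ℝ) (p : Alph m n → ℝ) (r : ℝ) : ℤ :=
  ⌊Real.log (qLo p ^ 2 * etaLo a b p r) / (r * Real.log (aHi a))⌋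

/-- `T_{1,r} := ⌊(A_1 + A_{5,r} + 3)/A_4⌋`. -/
def T1 (a : Alph m n → ℝ) (b : Fin m → ℝ) (p : Alph m n → ℝ) (r : ℝ) : ℤ :=
  ⌊((A1 a b + A5 a b p r + 3 : ℤ) : ℝ) / A4 a b⌋

/-- `ρ = σ^♭`:  for `σ ∈ Ψ_1`, `σ^♭ = θ`; for `σ ∈ Ψ_l` with `l ≥ 2`, `σ^♭` is the unique
`ρ ∈ Ψ_{l-1}` with `ρ_L = (σ_L)^-` and `ρ_y` an initial segment of `σ_y`. -/
def IsFlat (a : Alph m n → ℝ) (b : Fin m → ℝ) (σ ρ : Wd m n) : Prop :=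
  (σ.1.length = 1 ∧ ρ = (([], []) : Wd m n)) ∨
  (2 ≤ σ.1.length ∧ ρ ∈ Psi a b (σ.1.length - 1) ∧ ρ.1 = σ.1.dropLast ∧ sy ρ <+: sy σ)

/-- `Λ_{n,r} := {σ ∈ Ψ^* : E_r(σ^♭) ≥ η̲_r^n > E_r(σ)}`. -/
def Lam (a : Alph m n → ℝ) (b : Fin m → ℝ) (p : Alph m n → ℝ) (r : ℝ) (N : ℕ) :
    Set (Wd m n) :=
  {σ | σ ∈ PsiStar a b ∧ ∃ ρ : Wd m n, IsFlat a b σ ρ ∧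
    etaLo a b p r ^ N ≤ Er a p r ρ ∧ Er a p r σ < etaLo a b p r ^ N}

/-- `S_{n,r} := {σ ∈ Ψ^* : η̲_r^{n+1} ≤ E_r(σ) < η̲_r^n}`. -/
def Snr (a : Alph m n → ℝ) (b : Fin m → ℝ) (p : Alph m n → ℝ) (r : ℝ) (N : ℕ) :
    Set (Wd m n) :=
  {σ | σ ∈ PsiStar a b ∧ etaLo a b p r ^ (N + 1) ≤ Er a p r σ ∧
    Er a p r σ < etaLo a b p r ^ N}

/-- `G_1(σ) := {ω ∈ S_{n,r} : σ_L ⪯ ω_L and σ_y ⪯ ω_y}`. -/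
def G1 (a : Alph m n → ℝ) (b : Fin m → ℝ) (p : Alph m n → ℝ) (r : ℝ) (N : ℕ)
    (σ : Wd m n) : Set (Wd m n) :=
  {ω | ω ∈ Snr a b p r N ∧ σ.1 <+: ω.1 ∧ sy σ <+: sy ω}

/-- `Λ_h(σ) := {ρ ∈ Φ_{l+h} : σ ⪯ ρ}` (componentwise order on pairs). -/
def LamH (a : Alph m n → ℝ) (b : Fin m → ℝ) (σ : Wd m n) (h : ℕ) : Set (Wd m n) :=
  {ρ | ρ ∈ Psi a b (σ.1.length + h) ∧ σ.1 <+: ρ.1 ∧ σ.2 <+: ρ.2}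

/-- `I_{k,r}(t) := Σ_{ω∈Φ_k} E_r(ω)^t`. -/
def Ih (a : Alph m n → ℝ) (b : Fin m → ℝ) (p : Alph m n → ℝ) (r : ℝ) (k : ℕ) (t : ℝ) : ℝ :=
  ∑' ω : Psi a b k, Er a p r ω.1 ^ t

/-- `Υ_n(t,s) := Σ_{σ∈Ψ_n} (p_{σ_L} q_{σ_R})^t a_{σ_L}^s`. -/
def Ups (a : Alph m n → ℝ) (b : Fin m → ℝ) (p : Alph m n → ℝ) (N : ℕ) (t s : ℝ) : ℝ :=
  ∑' σ : Psi a b N, (pP p σ.1.1 * qP p σ.1.2) ^ t * aP a σ.1.1 ^ s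

/-- `τ_0 := ((1,j_0),(n_{j_0},j_0))`. -/
def tau0 (j0 : Fin m) (h : 2 ≤ n j0) : List (Alph m n) :=
  [⟨j0, ⟨0, by omega⟩⟩, ⟨j0, ⟨n j0 - 1, by omega⟩⟩]

/-- `σ̄` is a bar-extension of `σ ∈ Ψ_l`: `σ̄ ∈ Ψ_{l+2}`, `σ̄_L = σ_L ∗ τ_0`, `σ_R ⪯ σ̄_R`. -/
def BarExt (a : Alph m n → ℝ) (b : Fin m → ℝ) (j0 : Fin m) (h : 2 ≤ n j0)
    (σ σb : Wd m n) : Prop :=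
  σb ∈ Psi a b (σ.1.length + 2) ∧ σb.1 = σ.1 ++ tau0 j0 h ∧ σ.2 <+: σb.2

/-- cylinder set `[σ] ⊆ Φ_∞ = G^ℕ × G_y^ℕ`. -/
def Cyl (σ : Wd m n) : Set ((ℕ → Alph m n) × (ℕ → Fin m)) :=
  {x | (∀ i : ℕ, ∀ hi : i < σ.1.length, x.1 i = σ.1.get ⟨i, hi⟩) ∧
       (∀ i : ℕ, ∀ hi : i < σ.2.length, x.2 i = σ.2.get ⟨i, hi⟩)}

/-- the affine map `f_{ij}(x,y) = (a_{ij} x + c_{ij}, b_j y + d_j)`. -/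
def fmap (a : Alph m n → ℝ) (b : Fin m → ℝ) (c : Alph m n → ℝ) (d : Fin m → ℝ)
    (g : Alph m n) : ℝ × ℝ → ℝ × ℝ :=
  fun x => (a g * x.1 + c g, b g.1 * x.2 + d g.1)

/-- `A_{L,σ} = c_{i_1j_1} + Σ_{p≥2} (∏_{h<p} a_{i_hj_h}) c_{i_pj_p}`. -/
def xL (a c : Alph m n → ℝ) : List (Alph m n) → ℝ
  | [] => 0
  | g :: w => c g + a g * xL a c w

/-- `B_{L,σ} = d_{j_1} + Σ_{p≥2} (∏_{h<p} b_{j_h}) d_{j_p}`. -/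
def yL (b d : Fin m → ℝ) : List (Fin m) → ℝ
  | [] => 0
  | j :: τ => d j + b j * yL b d τ

/-- the approximate square `F_σ = [A_{L,σ}, A_{L,σ}+a_{σ_L}] × [B_{L,σ}, B_{L,σ}+b_{σ_y}]`. -/
def Fsq (a c : Alph m n → ℝ) (b d : Fin m → ℝ) (σ : Wd m n) : Set (ℝ × ℝ) :=
  Set.Icc (xL a c σ.1) (xL a c σ.1 + aP a σ.1) ×ˢ
    Set.Icc (yL b d (sy σ)) (yL b d (sy σ) + bP b (sy σ))

/-- the Euclidean distance on `ℝ²`. -/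
def eudist (x y : ℝ × ℝ) : ℝ := Real.sqrt ((x.1 - y.1) ^ 2 + (x.2 - y.2) ^ 2)

/-- the horizontal distance `d_h(S,T) = inf{|x-x'| : (x,y)∈S, (x',y')∈T}`. -/
def dH (S T : Set (ℝ × ℝ)) : ℝ := sInf {e | ∃ x ∈ S, ∃ y ∈ T, e = |x.1 - y.1|}

/-- the (Euclidean) diameter of a subset of `ℝ²`. -/
def euDiam (S : Set (ℝ × ℝ)) : ℝ := sSup {e | ∃ x ∈ S, ∃ y ∈ S, e = eudist x y}

/-- the `N`-th quantization error of order `r`. -/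
def qerr (μ : Measure (ℝ × ℝ)) (r : ℝ) (N : ℕ) : ℝ :=
  sInf {e : ℝ | ∃ α : Finset (ℝ × ℝ), ∃ hα : α.Nonempty, α.card ≤ N ∧
    e = (∫ x, α.inf' hα (fun y => eudist x y ^ r) ∂μ) ^ (1 / r)}

/-- the topological support of a measure on `ℝ²`. -/
def suppSet (μ : Measure (ℝ × ℝ)) : Set (ℝ × ℝ) :=
  {x | ∀ U : Set (ℝ × ℝ), IsOpen U → x ∈ U → μ U ≠ 0}

/-- the dyadic square `[k 2^{-N}, (k+1) 2^{-N}) × [k' 2^{-N}, (k'+1) 2^{-N})`. -/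
def Dy (N : ℕ) (k : ℤ × ℤ) : Set (ℝ × ℝ) :=
  Set.Ico ((k.1 : ℝ) * (2 : ℝ) ^ (-(N : ℤ))) (((k.1 : ℝ) + 1) * (2 : ℝ) ^ (-(N : ℤ))) ×ˢ
    Set.Ico ((k.2 : ℝ) * (2 : ℝ) ^ (-(N : ℤ))) (((k.2 : ℝ) + 1) * (2 : ℝ) ^ (-(N : ℤ)))

/-! If `σ_L ⪯ ω_L` and `ω_R` were a proper initial segment of `σ_R`, the upper bound for `σ`
would give `a_{σ_L} ≤ b_{σ_L,y} b_{ω_R}`, while the lower bound for `ω`, together with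
`a_e ≤ b_{e_y}` for `ω_L = σ_L e`, would give the opposite strict inequality. Cylinders of words
meeting in a point have comparable components, so (2) follows from (1). -/

lemma aP_append (a : Alph m n → ℝ) (u v : List (Alph m n)) :
    aP a (u ++ v) = aP a u * aP a v := by
  simp [aP]

lemma bP_append (b : Fin m → ℝ) (u v : List (Fin m)) :
    bP b (u ++ v) = bP b u * bP b v := by
  simp [bP]

section Bounds

variable {a : Alph m n → ℝ} {b : Fin m → ℝ}

lemma aP_nonneg (ha : ∀ g, 0 ≤ a g) (w : List (Alph m n)) : 0 ≤ aP a w :=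
  List.prod_nonneg fun _ hx => by obtain ⟨g, -, rfl⟩ := List.mem_map.1 hx; exact ha g

lemma bP_nonneg (hb : ∀ j, 0 ≤ b j) (τ : List (Fin m)) : 0 ≤ bP b τ :=
  List.prod_nonneg fun _ hx => by obtain ⟨j, -, rfl⟩ := List.mem_map.1 hx; exact hb j

lemma bP_le_one (hb : ∀ j, 0 ≤ b j ∧ b j ≤ 1) (τ : List (Fin m)) : bP b τ ≤ 1 := by
  simpa [bP] using List.prod_map_le_prod_map₀ (s := τ) b (fun _ => 1) (fun j _ => (hb j).1)
    (fun j _ => (hb j).2)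

lemma aP_le_bP_map_fst (hab : ∀ g, 0 ≤ a g ∧ a g ≤ b g.1) (w : List (Alph m n)) :
    aP a w ≤ bP b (w.map Sigma.fst) := by
  simpa [aP, bP] using
    List.prod_map_le_prod_map₀ a (b ∘ Sigma.fst) (fun g _ => (hab g).1) (fun g _ => (hab g).2)

end Bounds

theorem snd_eq_of_fst_prefix_of_snd_prefix {a : Alph m n → ℝ} {b : Fin m → ℝ}
    (hab : ∀ g, 0 ≤ a g ∧ a g ≤ b g.1) (hb : ∀ j, 0 ≤ b j ∧ b j ≤ 1) {σ ω : Wd m n}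
    (hσ : aP a σ.1 ≤ bP b (sy σ).dropLast) (hω : bP b (sy ω) < aP a ω.1)
    (hL : σ.1 <+: ω.1) (hR : ω.2 <+: σ.2) : σ.2 = ω.2 := by
  obtain ⟨e, he⟩ := hL
  obtain ⟨f, hf⟩ := hR
  rcases eq_or_ne f [] with rfl | hf_ne
  · simpa using hf.symm
  exfalso
  have hsyσ : (sy σ).dropLast = σ.1.map Sigma.fst ++ (ω.2 ++ f.dropLast) := by
    rw [sy, ← hf, ← List.append_assoc, List.dropLast_append_of_ne_nil hf_ne, List.append_assoc]
  have hsyω : sy ω = σ.1.map Sigma.fst ++ (e.map Sigma.fst ++ ω.2) := by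
    simp [sy, ← he]
  rw [hsyσ, bP_append, bP_append] at hσ
  rw [hsyω, bP_append, bP_append, ← he, aP_append] at hω
  set B := bP b (σ.1.map Sigma.fst) * bP b ω.2
  have hB : 0 ≤ B := mul_nonneg (bP_nonneg (fun j => (hb j).1) _) (bP_nonneg (fun j => (hb j).1) _)
  have hσB : aP a σ.1 ≤ B := by
    calc aP a σ.1 ≤ bP b (σ.1.map Sigma.fst) * (bP b ω.2 * bP b f.dropLast) := hσ
      _ ≤ B * 1 := by rw [← mul_assoc]; exact mul_le_mul_of_nonneg_left (bP_le_one hb _) hB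
      _ = B := mul_one B
  have hae := aP_le_bP_map_fst hab e
  have : B * bP b (e.map Sigma.fst) < B * bP b (e.map Sigma.fst) := by
    calc B * bP b (e.map Sigma.fst)
        = bP b (σ.1.map Sigma.fst) * (bP b (e.map Sigma.fst) * bP b ω.2) := by ring
      _ < aP a σ.1 * aP a e := hω
      _ ≤ B * aP a e := mul_le_mul_of_nonneg_right hσB (aP_nonneg (fun g => (hab g).1) e)
      _ ≤ B * bP b (e.map Sigma.fst) := mul_le_mul_of_nonneg_left hae hB
  exact lt_irrefl _ this

theorem snd_prefix_of_fst_prefix_of_mem_PsiStar {a : Alph m n → ℝ} {b : Fin m → ℝ}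
    (hab : ∀ g, 0 ≤ a g ∧ a g ≤ b g.1) (hb : ∀ j, 0 ≤ b j ∧ b j ≤ 1) {σ ω : Wd m n}
    (hσ : σ ∈ PsiStar a b) (hω : ω ∈ PsiStar a b) (hL : σ.1 <+: ω.1)
    (hR : σ.2 <+: ω.2 ∨ ω.2 <+: σ.2) : σ.2 <+: ω.2 := by
  obtain ⟨-, -, -, -, hσ_le, -⟩ := hσ
  obtain ⟨-, -, -, -, -, hω_lt⟩ := hω
  rcases hR with hR | hR
  · exact hR
  · rw [snd_eq_of_fst_prefix_of_snd_prefix hab hb hσ_le hω_lt hL hR]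

lemma prefix_or_prefix_of_get_eq {α : Type*} {x : ℕ → α} {u v : List α}
    (hu : ∀ i (hi : i < u.length), x i = u.get ⟨i, hi⟩)
    (hv : ∀ i (hi : i < v.length), x i = v.get ⟨i, hi⟩) : u <+: v ∨ v <+: u := by
  rcases le_total u.length v.length with h | h
  · exact .inl <| List.prefix_iff_getElem.2 ⟨h, fun i hi => (hu i hi).symm.trans (hv i _)⟩
  · exact .inr <| List.prefix_iff_getElem.2 ⟨h, fun i hi => (hv i hi).symm.trans (hu i _)⟩

lemma Cyl_subset_Cyl {σ ω : Wd m n} (hL : σ.1 <+: ω.1) (hR : σ.2 <+: ω.2) :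
    Cyl ω ⊆ Cyl σ := by
  rintro x ⟨hxL, hxR⟩
  exact ⟨fun i hi => (hxL i (hi.trans_le hL.length_le)).trans (hL.getElem hi).symm,
    fun i hi => (hxR i (hi.trans_le hR.length_le)).trans (hR.getElem hi).symm⟩

lemma prefix_or_prefix_of_mem_Cyl {σ ω : Wd m n} {x : (ℕ → Alph m n) × (ℕ → Fin m)}
    (hσ : x ∈ Cyl σ) (hω : x ∈ Cyl ω) :
    (σ.1 <+: ω.1 ∨ ω.1 <+: σ.1) ∧ (σ.2 <+: ω.2 ∨ ω.2 <+: σ.2) :=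
  ⟨prefix_or_prefix_of_get_eq hσ.1 hω.1, prefix_or_prefix_of_get_eq hσ.2 hω.2⟩

theorem stmt10_general
    (m : ℕ) (n : Fin m → ℕ) (hn : ∀ j, 1 ≤ n j)
    (a : Alph m n → ℝ) (b : Fin m → ℝ)
    (hab : ∀ g : Alph m n, 0 < a g ∧ a g < b g.1 ∧ b g.1 < 1)
    (σ ω : Wd m n) (hσ : σ ∈ PsiStar a b) (hω : ω ∈ PsiStar a b) :
    (σ.1 <+: ω.1 → (σ.2 <+: ω.2 ∨ ω.2 <+: σ.2) → σ.2 <+: ω.2) ∧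
    (Cyl σ ∩ Cyl ω = ∅ ∨ Cyl σ ⊆ Cyl ω ∨ Cyl ω ⊆ Cyl σ) := by
  have hab' : ∀ g : Alph m n, 0 ≤ a g ∧ a g ≤ b g.1 := fun g => ⟨(hab g).1.le, (hab g).2.1.le⟩
  have hb : ∀ j, 0 ≤ b j ∧ b j ≤ 1 := fun j =>
    have h := hab ⟨j, ⟨0, hn j⟩⟩
    ⟨(h.1.trans h.2.1).le, h.2.2.le⟩
  refine ⟨snd_prefix_of_fst_prefix_of_mem_PsiStar hab' hb hσ hω, ?_⟩
  rcases (Cyl σ ∩ Cyl ω).eq_empty_or_nonempty with h | ⟨x, hxσ, hxω⟩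
  · exact .inl h
  obtain ⟨hL | hL, hR⟩ := prefix_or_prefix_of_mem_Cyl hxσ hxω
  · exact .inr <| .inr <| Cyl_subset_Cyl hL
      (snd_prefix_of_fst_prefix_of_mem_PsiStar hab' hb hσ hω hL hR)
  · exact .inr <| .inl <| Cyl_subset_Cyl hL
      (snd_prefix_of_fst_prefix_of_mem_PsiStar hab' hb hω hσ hL hR.symm)

theorem stmt10
    (m : ℕ) (hm : 2 ≤ m) (n : Fin m → ℕ) (hn : ∀ j, 1 ≤ n j)
    (a : Alph m n → ℝ) (b : Fin m → ℝ)
    (hab : ∀ g : Alph m n, 0 < a g ∧ a g < b g.1 ∧ b g.1 < 1)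
    (σ ω : Wd m n) (hσ : σ ∈ PsiStar a b) (hω : ω ∈ PsiStar a b) :
    (σ.1 <+: ω.1 → (σ.2 <+: ω.2 ∨ ω.2 <+: σ.2) → σ.2 <+: ω.2) ∧
    (Cyl σ ∩ Cyl ω = ∅ ∨ Cyl σ ⊆ Cyl ω ∨ Cyl ω ⊆ Cyl σ) :=
  stmt10_general m n hn a b hab σ ω hσ hω

end

end LGQ
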